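/- Let U and V be 2-Dyck paths of lengths 3·n_U and 3·n_V, with corresponding non-crossing spanning trees T_U and T_V under the recursive bijection. Then the non-crossing spanning tree T_{UV} corresponding to the concatenation UV is the concatenation of T_U and T_V: the restriction of T_{UV} to vertices {0,…,n_U} equals T_U, and the restriction to {n_U,…,n_U+n_V} equals T_V shifted by n_U. -/

import Mathlib

/-- Two vertices are adjacent if they form an edge of `E` (in either order). -/
def NCAdj (E : Finset (ℕ × ℕ)) (x y : ℕ) : Prop := (x, y) ∈ E ∨ (y, x) ∈ E

/-- Connectivity via edges of `E`. -/
def NCConn (E : Finset (ℕ × ℕ)) (x y : ℕ) : Prop :=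
  Relation.ReflTransGen (NCAdj E) x y

/-- A non-crossing spanning tree on the points `0, 1, …, n`: a set of `n` edges
`(a,b)` with `a < b ≤ n`, no two of which cross (`a < c < b < d`), connecting
all of `{0,…,n}`. -/
def IsNCST (n : ℕ) (E : Finset (ℕ × ℕ)) : Prop :=
  E.card = n ∧ (∀ e ∈ E, e.1 < e.2 ∧ e.2 ≤ n) ∧
  (∀ a b c d : ℕ, (a, b) ∈ E → (c, d) ∈ E → a < c → c < b → b < d → False) ∧
  (∀ x, x ≤ n → NCConn E 0 x)

/-- A 2-Dyck path: a sequence over `{+1, -2}` with nonnegative partial sums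
summing to `0`. -/
def IsDyck2Path (w : List ℤ) : Prop :=
  (∀ a ∈ w, a = 1 ∨ a = -2) ∧ (∀ j, 0 ≤ (w.take j).sum) ∧ w.sum = 0

/-- Shift all edges of `E` by `d`. -/
def shiftE (E : Finset (ℕ × ℕ)) (d : ℕ) : Finset (ℕ × ℕ) :=
  E.image fun e => (e.1 + d, e.2 + d)

lemma shiftE_zero (E : Finset (ℕ × ℕ)) : shiftE E 0 = E := by
  unfold shiftE
  rw [show (fun e : ℕ × ℕ => (e.1 + 0, e.2 + 0)) = id from funext fun e => by simp]
  exact Finset.image_id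

lemma shiftE_shiftE (E : Finset (ℕ × ℕ)) (c d : ℕ) :
    shiftE (shiftE E c) d = shiftE E (c + d) := by
  unfold shiftE
  rw [Finset.image_image]
  congr 1
  funext e
  simp [add_assoc]

lemma mem_shiftE {E : Finset (ℕ × ℕ)} {d : ℕ} {e : ℕ × ℕ} :
    e ∈ shiftE E d ↔ ∃ x ∈ E, (x.1 + d, x.2 + d) = e := Finset.mem_image



lemma dyck2_length (w : List ℤ) (hw : IsDyck2Path w) : ∃ k, w.length = 3 * k := by
  obtain ⟨helem, -, hsum⟩ := hw
  have key : ∀ v : List ℤ, (∀ a ∈ v, a = 1 ∨ a = -2) → (3:ℤ) ∣ (v.length : ℤ) - v.sum := by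
    intro v hv
    induction v with
    | nil => simp
    | cons a t ih =>
      have h2 := ih (fun x hx => hv x (List.mem_cons_of_mem _ hx))
      obtain ⟨k, hk⟩ := h2
      rcases hv a (List.mem_cons_self ..) with h | h
      · exact ⟨k, by subst h; simp only [List.length_cons, List.sum_cons]; push_cast; linarith⟩
      · exact ⟨k + 1, by subst h; simp only [List.length_cons, List.sum_cons]; push_cast; linarith⟩
  obtain ⟨k, hk⟩ := key w helem
  rw [hsum, sub_zero] at hk
  exact ⟨k.toNat, by omega⟩
lemma dyck2_append {u v : List ℤ} (hu : IsDyck2Path u) (hv : IsDyck2Path v) :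
    IsDyck2Path (u ++ v) := by
  obtain ⟨he1, hp1, hs1⟩ := hu
  obtain ⟨he2, hp2, hs2⟩ := hv
  refine ⟨fun a ha => (List.mem_append.mp ha).elim (he1 a) (he2 a), fun j => ?_, by
    simp [List.sum_append, hs1, hs2]⟩
  rw [List.take_append, List.sum_append]
  exact add_nonneg (hp1 j) (hp2 _)

set_option maxHeartbeats 1000000 in
lemma dyck2_decomp (W : List ℤ) (hW : IsDyck2Path W) (hne : W ≠ []) :
    ∃ A B C, IsDyck2Path A ∧ IsDyck2Path B ∧ IsDyck2Path C ∧
      W = ((1:ℤ) :: A) ++ ((1:ℤ) :: B) ++ ((-2:ℤ) :: C) := by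
  obtain ⟨helem, hpre, hsum⟩ := hW
  set s : ℕ → ℤ := fun j => (W.take j).sum with hs
  have hsval : ∀ j, s j = (W.take j).sum := fun _ => rfl
  have hpre' : ∀ j, 0 ≤ s j := by intro j; rw [hsval]; exact hpre j
  clear_value s
  have hlen : 0 < W.length := List.length_pos_iff.mpr hne
  have hseg : ∀ m k, ((W.drop m).take k).sum = s (m + k) - s m := by
    intro m k
    simp only [hsval, List.take_add, List.sum_append]
    ring
  have hstep : ∀ (j : ℕ) (hj : j < W.length), s (j + 1) = s j + W[j]'hj := by
    intro j hj
    have h := hseg j 1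
    rw [List.drop_eq_getElem_cons hj] at h
    simp only [List.take_succ_cons, List.take_zero, List.sum_cons, List.sum_nil,
      add_zero] at h
    linarith
  have hmem : ∀ (j : ℕ) (hj : j < W.length), W[j]'hj = 1 ∨ W[j]'hj = -2 :=
    fun j hj => helem _ (List.getElem_mem hj)
  have hsN : s W.length = 0 := by rw [hsval, List.take_length]; exact hsum
  have hs0 : s 0 = 0 := by simp [hsval]
  have hW0 : W[0]'hlen = 1 := by
    have h1 := hstep 0 hlen
    have h2 : 0 ≤ s 1 := hpre' 1
    rcases hmem 0 hlen with h | h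
    · exact h
    · rw [hs0, h] at h1; norm_num at h1; omega
  have hs1 : s 1 = 1 := by
    have h := hstep 0 hlen
    rw [hs0, hW0] at h
    simpa using h
  have hex : ∃ t, 0 < t ∧ s t = 0 := ⟨W.length, hlen, hsN⟩
  have htspec := Nat.find_spec hex
  have htmin : ∀ m, m < Nat.find hex → ¬(0 < m ∧ s m = 0) :=
    fun m hm => Nat.find_min hex hm
  have htle : Nat.find hex ≤ W.length := Nat.find_min' hex ⟨hlen, hsN⟩
  set t := Nat.find hex with hts
  clear_value t
  obtain ⟨htpos, hst⟩ := htspec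
  have hint : ∀ j, 0 < j → j < t → 1 ≤ s j := by
    intro j hj hjt
    have h0 : 0 ≤ s j := hpre' j
    have h1 := htmin j hjt
    push_neg at h1
    have := h1 hj
    omega
  have ht2 : 2 ≤ t := by
    by_contra h
    have h1 : t = 1 := by omega
    rw [h1] at hst
    omega
  have hst1 : s (t - 1) = 2 ∧ W[t-1]'(by omega) = -2 := by
    have h1 := hstep (t - 1) (by omega)
    rw [show t - 1 + 1 = t by omega, hst] at h1
    have h2 := hint (t - 1) (by omega) (by omega)
    rcases hmem (t - 1) (by omega) with h | h <;> constructor <;> omega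
  have hu1 : 1 ≤ Nat.findGreatest (fun u => s u = 1) (t - 1) :=
    Nat.le_findGreatest (by omega) hs1
  have hsu : s (Nat.findGreatest (fun u => s u = 1) (t - 1)) = 1 :=
    Nat.findGreatest_spec (P := fun u => s u = 1) (by omega) hs1
  have hule : Nat.findGreatest (fun u => s u = 1) (t - 1) ≤ t - 1 :=
    Nat.findGreatest_le _
  have hmax : ∀ j, Nat.findGreatest (fun u => s u = 1) (t - 1) < j → j ≤ t - 1 → 2 ≤ s j := by
    intro j hj hjt
    have h1 := Nat.findGreatest_is_greatest (P := fun u => s u = 1) hj hjt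
    have h2 := hint j (by omega) (by omega)
    omega
  set u := Nat.findGreatest (fun u => s u = 1) (t - 1) with hus
  clear_value u
  have hWu : W[u]'(by omega) = 1 := by
    have h1 := hstep u (by omega)
    have h2 : 0 ≤ s (u + 1) := hpre' (u + 1)
    rcases hmem u (by omega) with h | h
    · exact h
    · rw [h, hsu] at h1; omega
  have hsu1 : s (u + 1) = 2 := by
    have h := hstep u (by omega)
    rw [hWu] at h
    omega
  have hut : u + 1 ≤ t - 1 := by
    rcases Nat.lt_or_ge u (t - 1) with h | h
    · omega
    · exfalso
      have he : u = t - 1 := by omega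
      rw [he, hst1.1] at hsu; omega
  refine ⟨(W.drop 1).take (u - 1), (W.drop (u + 1)).take (t - 2 - u), W.drop t, ?_, ?_, ?_, ?_⟩
  · refine ⟨fun a ha => helem a (((List.take_sublist _ _).trans (List.drop_sublist _ _)).mem ha),
      fun j => ?_, ?_⟩
    · rw [List.take_take, hseg]
      rcases Nat.eq_zero_or_pos (min j (u - 1)) with h | h
      · rw [h]; norm_num [hs1]
      · have h1 := hint (1 + min j (u - 1)) (by omega) (by omega)
        rw [hs1]; omega
    · rw [hseg, show 1 + (u - 1) = u by omega, hsu, hs1]; ring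
  · refine ⟨fun a ha => helem a (((List.take_sublist _ _).trans (List.drop_sublist _ _)).mem ha),
      fun j => ?_, ?_⟩
    · rw [List.take_take, hseg, hsu1]
      rcases Nat.eq_zero_or_pos (min j (t - 2 - u)) with h | h
      · rw [h]; rw [show u + 1 + 0 = u + 1 by omega, hsu1]; norm_num
      · have := hmax (u + 1 + min j (t - 2 - u)) (by omega) (by omega)
        omega
    · rw [hseg, hsu1, show u + 1 + (t - 2 - u) = t - 1 by omega, hst1.1]; ring
  · refine ⟨fun a ha => helem a ((List.drop_sublist _ _).mem ha), fun j => ?_, ?_⟩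
    · rw [hseg, hst]
      have h1 : 0 ≤ s (t + j) := hpre' (t + j)
      omega
    · have h := hseg t (W.length - t)
      rw [List.take_of_length_le (by simp)] at h
      rw [show t + (W.length - t) = W.length by omega, hsN, hst] at h
      rw [h]; ring
  · have hone : ∀ (m : ℕ) (hm : m < W.length), (W.drop m).take 1 = [W[m]'hm] := by
      intro m hm
      rw [List.drop_eq_getElem_cons hm]
      rfl
    have e1 : W.take u = (1:ℤ) :: (W.drop 1).take (u - 1) := by
      rw [show u = 1 + (u - 1) by omega, List.take_add,
        show W.take 1 = (W.drop 0).take 1 by rw [List.drop_zero], hone 0 hlen, hW0]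
      simp [show 1 + (u - 1) - 1 = u - 1 by omega]
    have e2 : (W.drop u).take (t - 1 - u) = (1:ℤ) :: (W.drop (u + 1)).take (t - 2 - u) := by
      rw [show t - 1 - u = 1 + (t - 2 - u) by omega, List.take_add, hone u (by omega), hWu,
        List.drop_drop]
      simp [Nat.add_comm]
    have e3 : W.drop (t - 1) = (-2:ℤ) :: W.drop t := by
      rw [List.drop_eq_getElem_cons (show t - 1 < W.length by omega), hst1.2,
        show t - 1 + 1 = t by omega]
    calc W = W.take u ++ W.drop u := (List.take_append_drop u W).symm
      _ = W.take u ++ ((W.drop u).take (t - 1 - u) ++ (W.drop u).drop (t - 1 - u)) := by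
          congr 1
          exact (List.take_append_drop _ _).symm
      _ = W.take u ++ ((W.drop u).take (t - 1 - u) ++ W.drop (t - 1)) := by
          rw [List.drop_drop, show u + (t - 1 - u) = t - 1 by omega]
      _ = ((1:ℤ) :: (W.drop 1).take (u - 1)) ++
            (((1:ℤ) :: (W.drop (u + 1)).take (t - 2 - u)) ++ ((-2:ℤ) :: W.drop t)) := by
          rw [e1, e2, e3]
      _ = _ := by simp

/-- For the recursive bijection `f` between 2-Dyck paths and non-crossing
spanning trees, the tree corresponding to a concatenation `UV` of 2-Dyck paths
is the concatenation of the corresponding trees: its restriction to `[0, n_U]`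
is `T_U` and its restriction to `[n_U, n_U + n_V]` is `T_V` shifted by `n_U`. -/
theorem dyck2_ncst_concatenation
    (f : List ℤ → Finset (ℕ × ℕ))
    (hbij : ∀ n, Set.BijOn f {w : List ℤ | IsDyck2Path w ∧ w.length = 3 * n}
      {E : Finset (ℕ × ℕ) | IsNCST n E})
    (hempty : f [] = ∅)
    (hrec : ∀ A B C : List ℤ, IsDyck2Path A → IsDyck2Path B → IsDyck2Path C →
      ∀ a b : ℕ, A.length = 3 * a → B.length = 3 * b →
        f (((1 : ℤ) :: A) ++ ((1 : ℤ) :: B) ++ ((-2 : ℤ) :: C)) =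
          f A ∪ shiftE (f B) (a + 1) ∪ shiftE (f C) (a + 1 + b) ∪
            {(0, a + 1 + b)})
    (U V : List ℤ) (hU : IsDyck2Path U) (hV : IsDyck2Path V)
    (nU nV : ℕ) (hlU : U.length = 3 * nU) (hlV : V.length = 3 * nV) :
    ((f (U ++ V)).filter fun e => e.2 ≤ nU) = f U ∧
    ((f (U ++ V)).filter fun e => nU ≤ e.1) = shiftE (f V) nU := by
  have hncst : ∀ (w : List ℤ) (n : ℕ), IsDyck2Path w → w.length = 3 * n →
      IsNCST n (f w) := fun w n h1 h2 => (hbij n).mapsTo ⟨h1, h2⟩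
  -- base case as a standalone statement
  have base : ∀ (V' : List ℤ), IsDyck2Path V' →
      (((f ([] ++ V')).filter fun e => e.2 ≤ 0) = f [] ∧
       ((f ([] ++ V')).filter fun e => 0 ≤ e.1) = shiftE (f V') 0) := by
    intro V' hV'
    obtain ⟨m, hm⟩ := dyck2_length V' hV'
    have hN := hncst V' m hV' hm
    rw [List.nil_append, hempty, shiftE_zero]
    constructor
    · rw [Finset.filter_eq_empty_iff]
      intro e he
      have := (hN.2.1 e he).1
      omega
    · exact Finset.filter_true_of_mem fun e _ => Nat.zero_le _
  have key : ∀ (N : ℕ) (U' : List ℤ), U'.length ≤ N → IsDyck2Path U' →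
      ∀ nU' : ℕ, U'.length = 3 * nU' →
      (((f (U' ++ V)).filter fun e => e.2 ≤ nU') = f U' ∧
       ((f (U' ++ V)).filter fun e => nU' ≤ e.1) = shiftE (f V) nU') := by
    intro N
    induction N with
    | zero =>
      intro U' hle hU' nU' hlU'
      have h0 : U' = [] := List.eq_nil_of_length_eq_zero (by omega)
      subst h0
      have h0' : nU' = 0 := by simpa using hlU'.symm
      subst h0'
      exact base V hV
    | succ n ih =>
      intro U' hle hU' nU' hlU'
      by_cases hne : U' = []
      · subst hne
        have h0' : nU' = 0 := by simpa using hlU'.symm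
        subst h0'
        exact base V hV
      · obtain ⟨A, B, C, hA, hB, hC, hUeq⟩ := dyck2_decomp U' hU' hne
        obtain ⟨a, ha⟩ := dyck2_length A hA
        obtain ⟨b, hb⟩ := dyck2_length B hB
        obtain ⟨c, hc⟩ := dyck2_length C hC
        have hlen : U'.length = 3 + A.length + B.length + C.length := by
          rw [hUeq]; simp; omega
        have hnU' : nU' = a + 1 + b + c := by omega
        have hCV : IsDyck2Path (C ++ V) := dyck2_append hC hV
        have habc : U' ++ V = ((1:ℤ) :: A) ++ ((1:ℤ) :: B) ++ ((-2:ℤ) :: (C ++ V)) := by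
          rw [hUeq]; simp
        have hfUV := hrec A B (C ++ V) hA hB hCV a b ha hb
        have hfU := hrec A B C hA hB hC a b ha hb
        have hIH := ih C (by omega) hC c hc
        have hNA := hncst A a hA ha
        have hNB := hncst B b hB hb
        constructor
        · rw [habc, hfUV, hUeq, hfU]
          rw [Finset.filter_union, Finset.filter_union, Finset.filter_union]
          have e1 : ((f A).filter fun e => e.2 ≤ nU') = f A :=
            Finset.filter_true_of_mem fun e he => by
              have := (hNA.2.1 e he).2; omega
          have e2 : ((shiftE (f B) (a + 1)).filter fun e => e.2 ≤ nU') =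
              shiftE (f B) (a + 1) :=
            Finset.filter_true_of_mem fun e he => by
              obtain ⟨x, hx, hxe⟩ := mem_shiftE.mp he
              have := (hNB.2.1 x hx).2
              have h2 : e.2 = x.2 + (a + 1) := by rw [← hxe]
              omega
          have e3 : ((shiftE (f (C ++ V)) (a + 1 + b)).filter fun e => e.2 ≤ nU') =
              shiftE (f C) (a + 1 + b) := by
            unfold shiftE
            rw [Finset.filter_image]
            rw [show ((f (C ++ V)).filter fun e => (e.1 + (a+1+b), e.2 + (a+1+b)).2 ≤ nU') =
                ((f (C ++ V)).filter fun e => e.2 ≤ c) from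
              Finset.filter_congr fun e _ => by simp only; omega]
            rw [hIH.1]
          have e4 : (({((0:ℕ), a + 1 + b)} : Finset (ℕ × ℕ)).filter fun e => e.2 ≤ nU') =
              {((0:ℕ), a + 1 + b)} :=
            Finset.filter_true_of_mem fun e he => by
              rw [Finset.mem_singleton] at he
              rw [he]; simp; omega
          rw [e1, e2, e3, e4]
        · rw [habc, hfUV]
          rw [Finset.filter_union, Finset.filter_union, Finset.filter_union]
          have z1 : ((f A).filter fun e => nU' ≤ e.1) = ∅ := by
            rw [Finset.filter_eq_empty_iff]
            intro e he
            have h1 := (hNA.2.1 e he)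
            omega
          have z2 : ((shiftE (f B) (a + 1)).filter fun e => nU' ≤ e.1) = ∅ := by
            rw [Finset.filter_eq_empty_iff]
            intro e he
            obtain ⟨x, hx, hxe⟩ := mem_shiftE.mp he
            have h1 := (hNB.2.1 x hx)
            have h2 : e.1 = x.1 + (a + 1) := by rw [← hxe]
            omega
          have z3 : ((shiftE (f (C ++ V)) (a + 1 + b)).filter fun e => nU' ≤ e.1) =
              shiftE (f V) nU' := by
            unfold shiftE
            rw [Finset.filter_image]
            rw [show ((f (C ++ V)).filter fun e => nU' ≤ (e.1 + (a+1+b), e.2 + (a+1+b)).1) =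
                ((f (C ++ V)).filter fun e => c ≤ e.1) from
              Finset.filter_congr fun e _ => by simp only; omega]
            have h3 := hIH.2
            rw [h3, show (Finset.image (fun e => (e.1 + (a+1+b), e.2 + (a+1+b)))
                (shiftE (f V) c)) = shiftE (shiftE (f V) c) (a+1+b) from rfl,
              shiftE_shiftE]
            congr 1
            omega
          have z4 : (({((0:ℕ), a + 1 + b)} : Finset (ℕ × ℕ)).filter fun e => nU' ≤ e.1) =
              ∅ := by
            rw [Finset.filter_eq_empty_iff]
            intro e he
            rw [Finset.mem_singleton] at he
            rw [he]; simp; omega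
          rw [z1, z2, z3, z4]
          simp
  exact key U.length U le_rfl hU nU hlU
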